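/- (Existence of the point P_hor) In the euclidean plane, let G_S: y = x − 1 and G_T: y = x + 1, and let L: y = m·x + b be a line with b ≠ 0 and m ≠ 1, meeting G_S at S and G_T at T. Then the point P_hor = ( (m − b²)/(b(m−1)), (m² − b²)/(b(m−1)) ) lies on L, the three points (0,0), P_hor + (1,0), S are collinear, and the three points (0,0), P_hor − (1,0), T are collinear. -/

import Mathlib

/-!
Writing `G_S` and `G_T` as `G_c : y = x + c` with `c = -1` and `c = 1` respectively, the point
`P_hor - (c, 0)` turns out to be the multiple `(b + m c) / b` of `L ∩ G_c`; this uses only `c² = 1`.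
Hence it lies on the line through the origin and that intersection point.
-/

theorem collinear_zero_smul_self {k V : Type*} [DivisionRing k] [AddCommGroup V] [Module k V]
    (t : k) (v : V) : Collinear k ({0, t • v, v} : Set V) := by
  rw [Set.insert_comm]
  apply collinear_insert_of_mem_affineSpan_pair
  simpa [AffineMap.lineMap_apply_module'] using AffineMap.lineMap_mem_affineSpan_pair t (0 : V) v

theorem eq_of_snd_eq_mul_add_of_snd_eq_add {m b c : ℝ} (hm : m ≠ 1) {p : ℝ × ℝ}
    (hpL : p.2 = m * p.1 + b) (hpG : p.2 = p.1 + c) :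
    p = ((c - b) / (m - 1), (m * c - b) / (m - 1)) := by
  have hm1 : m - 1 ≠ 0 := sub_ne_zero.mpr hm
  ext
  · field_simp
    linarith
  · field_simp
    linear_combination m * hpG - hpL

noncomputable def pHor (m b : ℝ) : ℝ × ℝ :=
  ((m - b ^ 2) / (b * (m - 1)), (m ^ 2 - b ^ 2) / (b * (m - 1)))

theorem pHor_snd (m : ℝ) {b : ℝ} (hb : b ≠ 0) (hm : m ≠ 1) :
    (pHor m b).2 = m * (pHor m b).1 + b := by
  have hm1 : m - 1 ≠ 0 := sub_ne_zero.mpr hm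
  simp only [pHor]
  field_simp
  ring

theorem pHor_sub_eq_smul {m b c : ℝ} (hb : b ≠ 0) (hm : m ≠ 1) (hc : c ^ 2 = 1) :
    pHor m b - (c, 0) = ((b + m * c) / b) • ((c - b) / (m - 1), (m * c - b) / (m - 1)) := by
  have hm1 : m - 1 ≠ 0 := sub_ne_zero.mpr hm
  ext
  · simp only [pHor, Prod.fst_sub, Prod.smul_fst, smul_eq_mul]
    field_simp
    linear_combination (-m) * hc
  · simp only [pHor, Prod.snd_sub, Prod.smul_snd, smul_eq_mul, sub_zero]
    field_simp
    linear_combination (-m ^ 2) * hc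

theorem collinear_zero_pHor_sub {m b c : ℝ} (hb : b ≠ 0) (hm : m ≠ 1) (hc : c ^ 2 = 1)
    {p : ℝ × ℝ} (hpL : p.2 = m * p.1 + b) (hpG : p.2 = p.1 + c) :
    Collinear ℝ ({0, pHor m b - (c, 0), p} : Set (ℝ × ℝ)) := by
  rw [pHor_sub_eq_smul hb hm hc, eq_of_snd_eq_mul_add_of_snd_eq_add hm hpL hpG]
  exact collinear_zero_smul_self _ _

theorem stmt_17 (m b : ℝ) (hb : b ≠ 0) (hm : m ≠ 1)
    (S T : ℝ × ℝ)
    (hSL : S.2 = m * S.1 + b) (hSG : S.2 = S.1 - 1)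
    (hTL : T.2 = m * T.1 + b) (hTG : T.2 = T.1 + 1) :
    let P : ℝ × ℝ := ((m - b ^ 2) / (b * (m - 1)), (m ^ 2 - b ^ 2) / (b * (m - 1)))
    P.2 = m * P.1 + b ∧
    Collinear ℝ ({(0, 0), P + (1, 0), S} : Set (ℝ × ℝ)) ∧
    Collinear ℝ ({(0, 0), P - (1, 0), T} : Set (ℝ × ℝ)) := by
  have hS := collinear_zero_pHor_sub (c := -1) hb hm (by norm_num) hSL (by linarith)
  rw [show ((-1 : ℝ), (0 : ℝ)) = -(1, 0) by simp, sub_neg_eq_add] at hS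
  exact ⟨pHor_snd m hb hm, hS, collinear_zero_pHor_sub hb hm (by norm_num) hTL hTG⟩
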